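/- Let f(z) = ∑_{n≥1} a_n e^{2πinz} be holomorphic on the upper half-plane with the series absolutely convergent. For a prime p and even integer k, the identity f|[[p,0],[0,1]] + ∑_{a=0}^{p-1} f|[[1,a],[0,p]] = a_p · p^{1-k/2} · f holds (with the weight-k stroke operator) if and only if a_{pn} - a_p·a_n + p^{k-1} a_{n/p} = 0 for all n ≥ 1 (with a_x = 0 when x is not a positive integer). -/

import Mathlib

/-!
Both sides of the stroke identity are compared through their `q`-expansions. Replacing `z` by
`p z` turns `∑ aₙ qⁿ` into `∑ a_{n/p} qⁿ`, while summing over the translates `(z + j) / p` keeps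
exactly the terms with `p ∣ n` (orthogonality of `p`-th roots of unity) and gives
`p ∑ a_{pn} qⁿ`. Hence the difference of the two sides is `p^{1-k/2}` times the `q`-series with
coefficients `a_{pn} - a_p aₙ + p^{k-1} a_{n/p}`, and a `q`-series converging on the upper half
plane vanishes identically only if all its coefficients vanish.
-/

open Complex Real

theorem IsPrimitiveRoot.geom_sum_pow_eq_ite {R : Type*} [CommRing R] [IsDomain R] {ζ : R} {k : ℕ}
    (hζ : IsPrimitiveRoot ζ k) (n : ℕ) :
    ∑ j ∈ Finset.range k, (ζ ^ n) ^ j = if k ∣ n then (k : R) else 0 := by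
  split_ifs with hkn
  · simp [(hζ.pow_eq_one_iff_dvd n).2 hkn]
  · have hne : ζ ^ n - 1 ≠ 0 := sub_ne_zero.2 (mt (hζ.pow_eq_one_iff_dvd n).1 hkn)
    have hgeom := mul_geom_sum (ζ ^ n) k
    rw [← pow_mul, mul_comm n, pow_mul, hζ.pow_eq_one, one_pow, sub_self] at hgeom
    exact (mul_eq_zero.1 hgeom).resolve_left hne

section MultiplesOf

variable {M : Type*} [AddCommMonoid M] [TopologicalSpace M] {F : ℕ → M} {p : ℕ}

theorem summable_comp_mul_iff (hp : 0 < p) (hF : ∀ n, ¬p ∣ n → F n = 0) :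
    Summable (fun m => F (p * m)) ↔ Summable F :=
  (mul_right_injective₀ hp.ne').summable_iff fun n hn => hF n fun ⟨m, hm⟩ => hn ⟨m, hm.symm⟩

theorem tsum_comp_mul_eq_tsum (hp : 0 < p) (hF : ∀ n, ¬p ∣ n → F n = 0) :
    ∑' m, F (p * m) = ∑' n, F n :=
  (mul_right_injective₀ hp.ne').tsum_eq fun n hn =>
    by_contra fun hnot => hn (hF n fun ⟨m, hm⟩ => hnot ⟨m, hm.symm⟩)

end MultiplesOf

noncomputable def qSeries (b : ℕ → ℂ) (z : ℂ) : ℂ := ∑' n : ℕ, b n * cexp (2 * π * I * n * z)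

def QSummable (b : ℕ → ℂ) : Prop :=
  ∀ z : ℂ, 0 < z.im → Summable fun n : ℕ => b n * cexp (2 * π * I * n * z)

-- With `w = p ^ (k - 1)`, the `q`-expansion coefficients of
-- `T_p f = p^{k/2-1} (f|[[p,0],[0,1]] + ∑ⱼ f|[[1,j],[0,p]])`.
def heckeCoeff (p : ℕ) (w : ℂ) (b : ℕ → ℂ) (n : ℕ) : ℂ :=
  b (p * n) + w * if p ∣ n then b (n / p) else 0

theorem im_natCast_mul_pos {p : ℕ} (hp : 0 < p) {z : ℂ} (hz : 0 < z.im) : 0 < ((p : ℂ) * z).im := by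
  simpa using mul_pos (Nat.cast_pos.2 hp) hz

theorem im_div_natCast_pos {p : ℕ} (hp : 0 < p) {z : ℂ} (hz : 0 < z.im) : 0 < (z / p).im := by
  simpa using div_pos hz (Nat.cast_pos.2 hp)

theorem exp_two_pi_I_natCast_mul_mul (p n : ℕ) (z : ℂ) :
    cexp (2 * π * I * (p * n : ℕ) * z) = cexp (2 * π * I * n * (p * z)) := by
  push_cast; ring_nf

theorem exp_two_pi_I_natCast_mul_mul_div {p : ℕ} (hp : 0 < p) (n : ℕ) (z : ℂ) :
    cexp (2 * π * I * (p * n : ℕ) * (z / p)) = cexp (2 * π * I * n * z) := by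
  rw [exp_two_pi_I_natCast_mul_mul, mul_div_cancel₀ _ (Nat.cast_ne_zero.2 hp.ne')]

theorem qSeries_eq_zero_iff {b : ℕ → ℂ} (hb : QSummable b) :
    (∀ z : ℂ, 0 < z.im → qSeries b z = 0) ↔ b = 0 := by
  refine ⟨fun h => funext fun m => ?_, fun h z _ => by simp [h, qSeries]⟩
  -- `b` is the Taylor expansion at `q = 0` of the cusp function of the zero function.
  have hsum (τ : UpperHalfPlane) :
      HasSum (fun n => b n • Function.Periodic.qParam 1 τ ^ n) ((0 : C(UpperHalfPlane, ℂ)) τ) := by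
    convert (hb τ τ.im_pos).hasSum using 1
    · ext n
      rw [Function.Periodic.qParam, smul_eq_mul, ← Complex.exp_nat_mul]
      push_cast
      ring_nf
    · exact (h τ τ.im_pos).symm
  have hanalytic : AnalyticAt ℂ (UpperHalfPlane.cuspFunction 1 ⇑(0 : C(UpperHalfPlane, ℂ))) 0 :=
    UpperHalfPlane.analyticAt_cuspFunction_zero one_pos (by simp [Function.Periodic])
      (mdifferentiable_const (c := 0)) (by simpa using UpperHalfPlane.zero_form_isBoundedAtImInfty)
  simpa [UpperHalfPlane.qExpansion_zero] using
    UpperHalfPlane.qExpansion_coeff_unique _ one_pos hanalytic hsum m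

namespace QSummable

variable {b c : ℕ → ℂ} {p : ℕ}

theorem add (hb : QSummable b) (hc : QSummable c) : QSummable (b + c) := fun z hz => by
  simpa [add_mul] using (hb z hz).add (hc z hz)

theorem sub (hb : QSummable b) (hc : QSummable c) : QSummable (b - c) := fun z hz => by
  simpa [sub_mul] using (hb z hz).sub (hc z hz)

theorem const_smul (w : ℂ) (hb : QSummable b) : QSummable (w • b) := fun z hz => by
  simpa [mul_assoc] using (hb z hz).mul_left w

theorem comp_mul (hb : QSummable b) (hp : 0 < p) : QSummable fun n => b (p * n) := fun z hz => by
  refine ((hb _ (im_div_natCast_pos hp hz)).comp_injective (mul_right_injective₀ hp.ne')).congr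
    fun n => ?_
  rw [Function.comp_apply, exp_two_pi_I_natCast_mul_mul_div hp]

theorem expand (hb : QSummable b) (hp : 0 < p) :
    QSummable fun n => if p ∣ n then b (n / p) else 0 := fun z hz => by
  refine (summable_comp_mul_iff hp fun n hn => by simp [hn]).1 ?_
  refine (hb _ (im_natCast_mul_pos hp hz)).congr fun n => ?_
  dsimp only
  rw [if_pos (dvd_mul_right p n), Nat.mul_div_cancel_left _ hp, exp_two_pi_I_natCast_mul_mul]

theorem heckeCoeff (hb : QSummable b) (hp : 0 < p) (w : ℂ) : QSummable (heckeCoeff p w b) :=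
  (hb.comp_mul hp).add ((hb.expand hp).const_smul w)

end QSummable

section qSeries

variable {b c : ℕ → ℂ} {p : ℕ} {z : ℂ}

theorem qSeries_add (hb : QSummable b) (hc : QSummable c) (hz : 0 < z.im) :
    qSeries (b + c) z = qSeries b z + qSeries c z := by
  simp only [qSeries, Pi.add_apply, add_mul]
  exact (hb z hz).tsum_add (hc z hz)

theorem qSeries_sub (hb : QSummable b) (hc : QSummable c) (hz : 0 < z.im) :
    qSeries (b - c) z = qSeries b z - qSeries c z := by
  simp only [qSeries, Pi.sub_apply, sub_mul]
  exact (hb z hz).tsum_sub (hc z hz)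

theorem qSeries_const_smul (w : ℂ) : qSeries (w • b) z = w * qSeries b z := by
  simp only [qSeries, Pi.smul_apply, smul_eq_mul, mul_assoc]
  exact tsum_mul_left

theorem qSeries_natCast_mul (hp : 0 < p) :
    qSeries b (p * z) = qSeries (fun n => if p ∣ n then b (n / p) else 0) z := by
  rw [qSeries, qSeries, ← tsum_comp_mul_eq_tsum hp
    (F := fun n => (if p ∣ n then b (n / p) else 0) * cexp (2 * π * I * n * z))
    fun n hn => by simp [hn]]
  refine tsum_congr fun n => ?_
  rw [if_pos (dvd_mul_right p n), Nat.mul_div_cancel_left _ hp, exp_two_pi_I_natCast_mul_mul]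

theorem sum_qSeries_add_div (hb : QSummable b) (hp : 0 < p) (hz : 0 < z.im) :
    ∑ j ∈ Finset.range p, qSeries b ((z + j) / p) = p * qSeries (fun n => b (p * n)) z := by
  have hζ := Complex.isPrimitiveRoot_exp p hp.ne'
  have hterm (n j : ℕ) : b n * cexp (2 * π * I * n * ((z + j) / p))
      = b n * cexp (2 * π * I * n * (z / p)) * (cexp (2 * π * I / p) ^ n) ^ j := by
    rw [← Complex.exp_nat_mul, ← Complex.exp_nat_mul, mul_assoc (b n), ← Complex.exp_add]
    congr 2
    field_simp
  calc ∑ j ∈ Finset.range p, qSeries b ((z + j) / p)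
      = ∑' n, ∑ j ∈ Finset.range p, b n * cexp (2 * π * I * n * ((z + j) / p)) :=
        (Summable.tsum_finsetSum (f := fun (j : ℕ) n => b n * cexp (2 * π * I * n * ((z + j) / p)))
          fun j _ => hb _ (im_div_natCast_pos hp (by simpa using hz))).symm
    _ = ∑' n, b n * cexp (2 * π * I * n * (z / p)) * if p ∣ n then (p : ℂ) else 0 := by
        simp_rw [hterm, ← Finset.mul_sum, hζ.geom_sum_pow_eq_ite]
    _ = ∑' m, p * (b (p * m) * cexp (2 * π * I * m * z)) := by
        rw [← tsum_comp_mul_eq_tsum hp fun n hn => by simp [hn]]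
        refine tsum_congr fun m => ?_
        rw [if_pos (dvd_mul_right p m), exp_two_pi_I_natCast_mul_mul_div hp]
        ring
    _ = p * qSeries (fun n => b (p * n)) z := tsum_mul_left

theorem qSeries_heckeCoeff (hb : QSummable b) (hp : 0 < p) (w : ℂ) (hz : 0 < z.im) :
    qSeries (heckeCoeff p w b) z
      = (p : ℂ)⁻¹ * ∑ j ∈ Finset.range p, qSeries b ((z + j) / p) + w * qSeries b (p * z) := by
  change qSeries ((fun n => b (p * n)) + w • fun n => if p ∣ n then b (n / p) else 0) z = _
  rw [qSeries_add (hb.comp_mul hp) ((hb.expand hp).const_smul w) hz, qSeries_const_smul,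
    ← qSeries_natCast_mul hp, sum_qSeries_add_div hb hp hz,
    inv_mul_cancel_left₀ (Nat.cast_ne_zero.2 hp.ne')]

end qSeries

theorem heckeCoeff_sub_smul_eq_zero_iff {b : ℕ → ℂ} (hb0 : b 0 = 0) (p : ℕ) (w c : ℂ) :
    heckeCoeff p w b - c • b = 0 ↔
      ∀ n : ℕ, 1 ≤ n → b (p * n) - c * b n + w * (if p ∣ n then b (n / p) else 0) = 0 := by
  have happly (n : ℕ) : (heckeCoeff p w b - c • b) n
      = b (p * n) - c * b n + w * (if p ∣ n then b (n / p) else 0) := by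
    simp only [Pi.sub_apply, Pi.smul_apply, heckeCoeff, smul_eq_mul]
    ring
  simp only [funext_iff, Pi.zero_apply, happly]
  refine ⟨fun h n _ => h n, fun h n => ?_⟩
  rcases Nat.eq_zero_or_pos n with rfl | hn
  · simp [hb0]
  · exact h n hn

theorem hecke_operator_iff_recursion (p : ℕ) (hp : p.Prime)
    (k : ℕ) (hk : 0 < k) (hke : Even k)
    (a : ℕ → ℂ) (ha0 : a 0 = 0) (f : ℂ → ℂ)
    (hsum : ∀ z : ℂ, 0 < z.im →
      Summable fun n : ℕ => ‖a n * Complex.exp (2 * π * I * n * z)‖)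
    (hf : ∀ z : ℂ, 0 < z.im → f z = ∑' n : ℕ, a n * Complex.exp (2 * π * I * n * z)) :
    (∀ z : ℂ, 0 < z.im →
        (p : ℂ) ^ ((k : ℤ) / 2) * f (p * z)
          + (p : ℂ) ^ ((k : ℤ) / 2 - k) * ∑ j ∈ Finset.range p, f ((z + j) / p)
        = a p * (p : ℂ) ^ (1 - (k : ℤ) / 2) * f z) ↔
    (∀ n : ℕ, 1 ≤ n →
        a (p * n) - a p * a n + (p : ℂ) ^ (k - 1) * (if p ∣ n then a (n / p) else 0) = 0) := by
  have hp0 : (p : ℂ) ≠ 0 := Nat.cast_ne_zero.2 hp.ne_zero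
  have ha : QSummable a := fun z hz => summable_norm_iff.mp (hsum z hz)
  have hfa : ∀ z : ℂ, 0 < z.im → f z = qSeries a z := hf
  obtain ⟨r, hr⟩ := hke
  have hweight : (p : ℂ) ^ ((k : ℤ) / 2) = (p : ℂ) ^ (1 - (k : ℤ) / 2) * (p : ℂ) ^ (k - 1) := by
    rw [← zpow_natCast, ← zpow_add₀ hp0]
    congr 1
    omega
  have hweight' : (p : ℂ) ^ ((k : ℤ) / 2 - k) = (p : ℂ) ^ (1 - (k : ℤ) / 2) * (p : ℂ)⁻¹ := by
    rw [← zpow_neg_one, ← zpow_add₀ hp0]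
    congr 1
    omega
  have hqSeries (z : ℂ) (hz : 0 < z.im) :
      (p : ℂ) ^ ((k : ℤ) / 2) * f (p * z)
        + (p : ℂ) ^ ((k : ℤ) / 2 - k) * ∑ j ∈ Finset.range p, f ((z + j) / p)
        - a p * (p : ℂ) ^ (1 - (k : ℤ) / 2) * f z
      = (p : ℂ) ^ (1 - (k : ℤ) / 2) * qSeries (heckeCoeff p ((p : ℂ) ^ (k - 1)) a - a p • a) z := by
    rw [qSeries_sub (ha.heckeCoeff hp.pos _) (ha.const_smul _) hz, qSeries_const_smul,
      qSeries_heckeCoeff ha hp.pos _ hz, hfa z hz, hfa _ (im_natCast_mul_pos hp.pos hz),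
      Finset.sum_congr rfl fun j _ => hfa _ (im_div_natCast_pos hp.pos (by simpa using hz)),
      hweight, hweight']
    ring
  rw [← heckeCoeff_sub_smul_eq_zero_iff ha0, ← qSeries_eq_zero_iff
    ((ha.heckeCoeff hp.pos _).sub (ha.const_smul _))]
  refine forall₂_congr fun z hz => ?_
  rw [← sub_eq_zero, hqSeries z hz, mul_eq_zero, or_iff_right (zpow_ne_zero _ hp0)]
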